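/- For every integer n ≥ 1, the composite manipulation F := S ∘ T ∘ S ∘ T⁻¹ ∘ S satisfies F ∘ F = id on functions G × G → ℂ, and F (Z 0) = Z 1 and F (Z 1) = Z 0; i.e. F is a duality operation exchanging the trivial SPT phase and the level-1 ℤ_n×ℤ_n SPT phase. -/
import Mathlib


/-!
Torus partition functions of (1+1)d theories with ℤ_n×ℤ_n symmetry,
modeled as functions `GG n × GG n → ℂ` where `GG n := ZMod n × ZMod n`
records the holonomies of each ℤ_n background gauge field around the
two cycles of the torus.
-/

noncomputable section

/-- The holonomy group of one ℤ_n background gauge field on the torus. -/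
abbrev GG (n : ℕ) := ZMod n × ZMod n

/-- The intersection pairing `ε a b = a₁ b₂ - a₂ b₁`. -/
def epsPair {n : ℕ} (a b : GG n) : ZMod n := a.1 * b.2 - a.2 * b.1

/-- The character `e x = exp(2πi x.val / n)`. -/
def eChar (n : ℕ) (x : ZMod n) : ℂ :=
  Complex.exp (2 * Real.pi * Complex.I * (x.val : ℂ) / n)

/-- The gauging operation `S` on torus partition functions. -/
def gaugeS (n : ℕ) [NeZero n] (f : GG n × GG n → ℂ) : GG n × GG n → ℂ :=
  fun P => (n : ℂ)⁻¹ * (n : ℂ)⁻¹ *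
    ∑ a : GG n, ∑ b : GG n, f (a, b) * eChar n (epsPair a P.2 + epsPair b P.1)

/-- The SPT-stacking operation `T` on torus partition functions. -/
def stackT (n : ℕ) (f : GG n × GG n → ℂ) : GG n × GG n → ℂ :=
  fun P => f P * eChar n (epsPair P.1 P.2)

/-- The inverse SPT-stacking operation `T⁻¹` on torus partition functions. -/
def stackTinv (n : ℕ) (f : GG n × GG n → ℂ) : GG n × GG n → ℂ :=
  fun P => f P * eChar n (-(epsPair P.1 P.2))

/-- The torus partition function of the level-`k` ℤ_n×ℤ_n SPT phase. -/
def Zspt (n : ℕ) (k : ZMod n) : GG n × GG n → ℂ :=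
  fun P => eChar n (k * epsPair P.1 P.2)

section Aux

set_option linter.unusedSectionVars false

variable {n : ℕ} [NeZero n]

lemma eChar_zero : eChar n 0 = 1 := by
  simp [eChar]

lemma eChar_add (x y : ZMod n) : eChar n (x + y) = eChar n x * eChar n y := by
  have hn : (n:ℂ) ≠ 0 := Nat.cast_ne_zero.2 (NeZero.ne n)
  rw [eChar, eChar, eChar, ← Complex.exp_add]
  set k : ℕ := (x.val + y.val) / n with hkdef
  have h0 : x.val + y.val = (x + y).val + n * k := by
    rw [ZMod.val_add, hkdef]; exact (Nat.mod_add_div _ _).symm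
  have hval : (x.val : ℂ) + (y.val : ℂ) = ((x + y).val : ℂ) + (n : ℂ) * (k : ℂ) := by
    exact_mod_cast congrArg (Nat.cast : ℕ → ℂ) h0
  have hnk : (2*(Real.pi:ℂ)*Complex.I)*((n:ℂ)*(k:ℂ))/(n:ℂ) = (k:ℂ)*(2*(Real.pi:ℂ)*Complex.I) := by
    rw [show (2*(Real.pi:ℂ)*Complex.I)*((n:ℂ)*(k:ℂ)) = ((2*(Real.pi:ℂ)*Complex.I)*(k:ℂ))*(n:ℂ) by ring,
        mul_div_cancel_right₀ _ hn]
    ring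
  have key : 2*(Real.pi:ℂ)*Complex.I*(x.val : ℂ)/n + 2*(Real.pi:ℂ)*Complex.I*(y.val : ℂ)/n
      = 2*(Real.pi:ℂ)*Complex.I*(((x+y).val : ℕ) : ℂ)/n + (k : ℂ) * (2*(Real.pi:ℂ)*Complex.I) := by
    calc 2*(Real.pi:ℂ)*Complex.I*(x.val : ℂ)/n + 2*(Real.pi:ℂ)*Complex.I*(y.val : ℂ)/n
        = 2*(Real.pi:ℂ)*Complex.I*((x.val : ℂ) + (y.val : ℂ))/n := by ring
      _ = 2*(Real.pi:ℂ)*Complex.I*(((x+y).val : ℂ) + (n:ℂ)*(k:ℂ))/n := by rw [hval]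
      _ = 2*(Real.pi:ℂ)*Complex.I*((x+y).val : ℂ)/n
            + (2*(Real.pi:ℂ)*Complex.I)*((n:ℂ)*(k:ℂ))/(n:ℂ) := by ring
      _ = _ := by rw [hnk]
  rw [key, Complex.exp_add]
  have : Complex.exp ((k:ℂ) * (2*(Real.pi:ℂ)*Complex.I)) = 1 := by
    exact_mod_cast Complex.exp_int_mul_two_pi_mul_I (k : ℤ)
  rw [this, mul_one]

lemma eChar_ne_one {c : ZMod n} (h : c ≠ 0) : eChar n c ≠ 1 := by
  intro h1
  rw [eChar, Complex.exp_eq_one_iff] at h1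
  obtain ⟨k, hk⟩ := h1
  have hn : (n:ℂ) ≠ 0 := Nat.cast_ne_zero.2 (NeZero.ne n)
  have hpi : (Real.pi:ℂ) ≠ 0 := by exact_mod_cast Real.pi_ne_zero
  have hI := Complex.I_ne_zero
  have h2 : (2:ℂ) * Real.pi * Complex.I ≠ 0 := by simp [hpi, hI]
  have hcv : (c.val : ℂ) = (k : ℂ) * n := by
    apply mul_left_cancel₀ h2
    calc (2:ℂ)*Real.pi*Complex.I * (c.val:ℂ)
        = 2*(Real.pi:ℂ)*Complex.I*(c.val:ℂ)/n * n := (div_mul_cancel₀ _ hn).symm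
      _ = (k:ℂ)*(2*(Real.pi:ℂ)*Complex.I) * n := by rw [hk]
      _ = 2*(Real.pi:ℂ)*Complex.I*((k:ℂ)*n) := by ring
  have hz : (c.val : ℤ) = k * n := by exact_mod_cast hcv
  have hlt : c.val < n := ZMod.val_lt c
  have hne : c.val ≠ 0 := fun h0 => h ((ZMod.val_eq_zero c).1 h0)
  have hdvd : (n:ℤ) ∣ (c.val : ℤ) := ⟨k, by linarith [hz]⟩
  have hdvd' : n ∣ c.val := Int.ofNat_dvd.mp hdvd
  exact hne (Nat.eq_zero_of_dvd_of_lt hdvd' hlt)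

lemma sum_eChar_mul (c : ZMod n) :
    ∑ x : ZMod n, eChar n (x * c) = if c = 0 then (n:ℂ) else 0 := by
  split_ifs with h
  · simp [h, eChar_zero, ZMod.card]
  · have h1 : eChar n c ≠ 1 := eChar_ne_one h
    have key : eChar n c * ∑ x : ZMod n, eChar n (x * c) = ∑ x : ZMod n, eChar n (x * c) := by
      rw [Finset.mul_sum]
      refine Fintype.sum_equiv (Equiv.addLeft 1) _ _ (fun x => ?_)
      rw [← eChar_add]
      congr 1
      simp [Equiv.addLeft]
      ring
    have h2 : (eChar n c - 1) * ∑ x : ZMod n, eChar n (x * c) = 0 := by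
      rw [sub_mul, one_mul, key, sub_self]
    rcases mul_eq_zero.1 h2 with h3 | h3
    · exact absurd (sub_eq_zero.1 h3) h1
    · exact h3

lemma sum_eChar_eps (c : GG n) :
    ∑ a : GG n, eChar n (epsPair a c) = if c = 0 then (n:ℂ)*(n:ℂ) else 0 := by
  rw [Fintype.sum_prod_type]
  have : ∀ x y : ZMod n, epsPair (x, y) c = x * c.2 + y * (-c.1) := by
    intro x y; simp [epsPair]; ring
  simp only [this, eChar_add]
  rw [← Finset.sum_mul_sum]
  rw [sum_eChar_mul, sum_eChar_mul]
  rcases eq_or_ne c 0 with h | h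
  · simp [h]
  · have : ¬(c.1 = 0 ∧ c.2 = 0) := by
      intro ⟨h1, h2⟩; exact h (Prod.ext h1 h2)
    by_cases h2 : c.2 = 0 <;> by_cases h1 : c.1 = 0 <;>
      simp_all [neg_eq_zero, Prod.ext_iff]

lemma collapseSub (φ : GG n → ℂ) (w : GG n) :
    ∑ b : GG n, (∑ a : GG n, eChar n (epsPair a (w - b))) * φ b
      = (n:ℂ) * (n:ℂ) * φ w := by
  have h : ∀ b : GG n, (∑ a : GG n, eChar n (epsPair a (w - b))) * φ b
      = if b = w then (n:ℂ)*(n:ℂ)*φ b else 0 := by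
    intro b
    rw [sum_eChar_eps]
    rcases eq_or_ne b w with h1 | h1
    · simp [h1]
    · have : ¬(w - b = 0) := fun h2 => h1 (by rwa [sub_eq_zero, eq_comm] at h2)
      simp [h1, this]
  rw [Finset.sum_congr rfl (fun b _ => h b), Fintype.sum_ite_eq' w (fun b => (n:ℂ)*(n:ℂ)*φ b)]

lemma collapseAdd (φ : GG n → ℂ) (w : GG n) :
    ∑ b : GG n, (∑ a : GG n, eChar n (epsPair a (w + b))) * φ b
      = (n:ℂ) * (n:ℂ) * φ (-w) := by
  have h : ∀ b : GG n, (∑ a : GG n, eChar n (epsPair a (w + b))) * φ b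
      = if b = -w then (n:ℂ)*(n:ℂ)*φ b else 0 := by
    intro b
    rw [sum_eChar_eps]
    rcases eq_or_ne b (-w) with h1 | h1
    · simp [h1]
    · have : ¬(w + b = 0) := fun h2 => h1 (by linear_combination h2)
      simp [h1, this]
  rw [Finset.sum_congr rfl (fun b _ => h b), Fintype.sum_ite_eq' (-w) (fun b => (n:ℂ)*(n:ℂ)*φ b)]

lemma exchange4 {M : Type*} [AddCommMonoid M] (F : GG n → GG n → GG n → GG n → M) :
    ∑ a : GG n, ∑ b : GG n, ∑ c : GG n, ∑ d : GG n, F a b c d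
      = ∑ c : GG n, ∑ d : GG n, ∑ b : GG n, ∑ a : GG n, F a b c d := by
  calc ∑ a : GG n, ∑ b : GG n, ∑ c : GG n, ∑ d : GG n, F a b c d
      = ∑ b : GG n, ∑ a : GG n, ∑ c : GG n, ∑ d : GG n, F a b c d := Finset.sum_comm
    _ = ∑ b : GG n, ∑ c : GG n, ∑ a : GG n, ∑ d : GG n, F a b c d :=
        Finset.sum_congr rfl (fun b _ => Finset.sum_comm)
    _ = ∑ b : GG n, ∑ c : GG n, ∑ d : GG n, ∑ a : GG n, F a b c d :=
        Finset.sum_congr rfl (fun b _ => Finset.sum_congr rfl (fun c _ => Finset.sum_comm))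
    _ = ∑ c : GG n, ∑ b : GG n, ∑ d : GG n, ∑ a : GG n, F a b c d := Finset.sum_comm
    _ = ∑ c : GG n, ∑ d : GG n, ∑ b : GG n, ∑ a : GG n, F a b c d :=
        Finset.sum_congr rfl (fun c _ => Finset.sum_comm)

lemma L1 (f : GG n × GG n → ℂ) (A B : GG n) :
    gaugeS n (stackTinv n (gaugeS n f)) (A, B)
      = (n:ℂ)⁻¹ * (n:ℂ)⁻¹ * ∑ c : GG n, ∑ d : GG n,
          f (c, d) * eChar n (epsPair c (B - d) + epsPair (B - d) A) := by
  have hn : (n:ℂ) ≠ 0 := Nat.cast_ne_zero.2 (NeZero.ne n)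
  simp only [gaugeS, stackTinv]
  have h1 : ∀ a b : GG n,
      ((n:ℂ)⁻¹ * (n:ℂ)⁻¹ *
          (∑ c : GG n, ∑ d : GG n, f (c, d) * eChar n (epsPair c (a, b).2 + epsPair d (a, b).1))
          * eChar n (-(epsPair (a, b).1 (a, b).2)))
          * eChar n (epsPair a (A, B).2 + epsPair b (A, B).1)
        = (n:ℂ)⁻¹ * (n:ℂ)⁻¹ * ∑ c : GG n, ∑ d : GG n,
            eChar n (epsPair a ((B - d) - b)) * (f (c, d) * eChar n (epsPair c b + epsPair b A)) := by
    intro a b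
    simp only [Finset.mul_sum, Finset.sum_mul]
    refine Finset.sum_congr rfl (fun c _ => Finset.sum_congr rfl (fun d _ => ?_))
    have hE : eChar n (epsPair c b + epsPair d a) * eChar n (-(epsPair a b))
          * eChar n (epsPair a B + epsPair b A)
        = eChar n (epsPair a ((B - d) - b)) * eChar n (epsPair c b + epsPair b A) := by
      rw [← eChar_add, ← eChar_add, ← eChar_add]
      congr 1
      simp only [epsPair, Prod.fst_sub, Prod.snd_sub]
      ring
    linear_combination ((n:ℂ)⁻¹ * (n:ℂ)⁻¹ * f (c, d)) * hE
  rw [Finset.sum_congr rfl (fun a _ => Finset.sum_congr rfl (fun b _ => h1 a b))]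
  rw [show (∑ a : GG n, ∑ b : GG n, ((n:ℂ)⁻¹ * (n:ℂ)⁻¹ * ∑ c : GG n, ∑ d : GG n,
        eChar n (epsPair a ((B - d) - b)) * (f (c, d) * eChar n (epsPair c b + epsPair b A))))
      = (n:ℂ)⁻¹ * (n:ℂ)⁻¹ * ∑ a : GG n, ∑ b : GG n, ∑ c : GG n, ∑ d : GG n,
        eChar n (epsPair a ((B - d) - b)) * (f (c, d) * eChar n (epsPair c b + epsPair b A)) from by
    simp only [← Finset.mul_sum]]
  rw [exchange4 (fun a b c d =>
        eChar n (epsPair a ((B - d) - b)) * (f (c, d) * eChar n (epsPair c b + epsPair b A)))]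
  have h2 : ∀ c d : GG n,
      (∑ b : GG n, ∑ a : GG n,
          eChar n (epsPair a ((B - d) - b)) * (f (c, d) * eChar n (epsPair c b + epsPair b A)))
        = (n:ℂ) * (n:ℂ) * (f (c, d) * eChar n (epsPair c (B - d) + epsPair (B - d) A)) := by
    intro c d
    have := collapseSub (fun b => f (c, d) * eChar n (epsPair c b + epsPair b A)) (B - d)
    simpa only [Finset.sum_mul] using this
  rw [Finset.sum_congr rfl (fun c _ => Finset.sum_congr rfl (fun d _ => h2 c d))]
  rw [show (∑ c : GG n, ∑ d : GG n, (n:ℂ) * (n:ℂ) *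
        (f (c, d) * eChar n (epsPair c (B - d) + epsPair (B - d) A)))
      = (n:ℂ) * (n:ℂ) * ∑ c : GG n, ∑ d : GG n,
        f (c, d) * eChar n (epsPair c (B - d) + epsPair (B - d) A) from by
    simp only [← Finset.mul_sum]]
  field_simp

lemma L2 (f : GG n × GG n → ℂ) (A B : GG n) :
    gaugeS n (stackT n (gaugeS n (stackTinv n (gaugeS n f)))) (A, B)
      = f (A, -B) * eChar n (epsPair A B) := by
  have hn : (n:ℂ) ≠ 0 := Nat.cast_ne_zero.2 (NeZero.ne n)
  set u := gaugeS n (stackTinv n (gaugeS n f)) with hu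
  simp only [gaugeS, stackT]
  have h1 : ∀ p q : GG n,
      (u (p, q) * eChar n (epsPair (p, q).1 (p, q).2))
          * eChar n (epsPair p (A, B).2 + epsPair q (A, B).1)
        = (n:ℂ)⁻¹ * (n:ℂ)⁻¹ * ∑ c : GG n, ∑ d : GG n,
            eChar n (epsPair p (B + d)) * (f (c, d) * eChar n (epsPair c (q - d) + epsPair q A)) := by
    intro p q
    rw [hu, L1 f p q]
    simp only [Finset.mul_sum, Finset.sum_mul]
    refine Finset.sum_congr rfl (fun c _ => Finset.sum_congr rfl (fun d _ => ?_))
    have hE : eChar n (epsPair c (q - d) + epsPair (q - d) p) * eChar n (epsPair (p, q).1 (p, q).2)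
          * eChar n (epsPair p (A, B).2 + epsPair q (A, B).1)
        = eChar n (epsPair p (B + d)) * eChar n (epsPair c (q - d) + epsPair q A) := by
      rw [← eChar_add, ← eChar_add, ← eChar_add]
      congr 1
      simp only [epsPair, Prod.fst_sub, Prod.snd_sub, Prod.fst_add, Prod.snd_add]
      ring
    linear_combination ((n:ℂ)⁻¹ * (n:ℂ)⁻¹ * f (c, d)) * hE
  rw [Finset.sum_congr rfl (fun p _ => Finset.sum_congr rfl (fun q _ => h1 p q))]
  rw [show (∑ p : GG n, ∑ q : GG n, ((n:ℂ)⁻¹ * (n:ℂ)⁻¹ * ∑ c : GG n, ∑ d : GG n,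
        eChar n (epsPair p (B + d)) * (f (c, d) * eChar n (epsPair c (q - d) + epsPair q A))))
      = (n:ℂ)⁻¹ * (n:ℂ)⁻¹ * ∑ p : GG n, ∑ q : GG n, ∑ c : GG n, ∑ d : GG n,
        eChar n (epsPair p (B + d)) * (f (c, d) * eChar n (epsPair c (q - d) + epsPair q A)) from by
    simp only [← Finset.mul_sum]]
  rw [exchange4 (fun p q c d =>
        eChar n (epsPair p (B + d)) * (f (c, d) * eChar n (epsPair c (q - d) + epsPair q A)))]
  rw [Finset.sum_congr rfl (fun c (_ : c ∈ Finset.univ) => (Finset.sum_comm :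
      (∑ d : GG n, ∑ q : GG n, ∑ p : GG n,
        eChar n (epsPair p (B + d)) * (f (c, d) * eChar n (epsPair c (q - d) + epsPair q A)))
      = ∑ q : GG n, ∑ d : GG n, ∑ p : GG n,
        eChar n (epsPair p (B + d)) * (f (c, d) * eChar n (epsPair c (q - d) + epsPair q A))))]
  have h2 : ∀ c q : GG n,
      (∑ d : GG n, ∑ p : GG n,
          eChar n (epsPair p (B + d)) * (f (c, d) * eChar n (epsPair c (q - d) + epsPair q A)))
        = (n:ℂ) * (n:ℂ) * (f (c, -B) * eChar n (epsPair c (q + B) + epsPair q A)) := by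
    intro c q
    have := collapseAdd (fun d => f (c, d) * eChar n (epsPair c (q - d) + epsPair q A)) B
    simpa only [Finset.sum_mul, sub_neg_eq_add] using this
  rw [Finset.sum_congr rfl (fun c _ => Finset.sum_congr rfl (fun q _ => h2 c q))]
  rw [show (∑ c : GG n, ∑ q : GG n, (n:ℂ) * (n:ℂ) *
        (f (c, -B) * eChar n (epsPair c (q + B) + epsPair q A)))
      = (n:ℂ) * (n:ℂ) * ∑ c : GG n, ∑ q : GG n,
        f (c, -B) * eChar n (epsPair c (q + B) + epsPair q A) from by
    simp only [← Finset.mul_sum]]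
  have h3 : ∀ c : GG n,
      (∑ q : GG n, f (c, -B) * eChar n (epsPair c (q + B) + epsPair q A))
        = (∑ q : GG n, eChar n (epsPair q (A - c))) * (f (c, -B) * eChar n (epsPair c B)) := by
    intro c
    rw [Finset.sum_mul]
    refine Finset.sum_congr rfl (fun q _ => ?_)
    have hE : eChar n (epsPair c (q + B) + epsPair q A)
        = eChar n (epsPair q (A - c)) * eChar n (epsPair c B) := by
      rw [← eChar_add]
      congr 1
      simp only [epsPair, Prod.fst_sub, Prod.snd_sub, Prod.fst_add, Prod.snd_add]
      ring
    linear_combination f (c, -B) * hE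
  rw [Finset.sum_congr rfl (fun c _ => h3 c)]
  rw [collapseSub (fun c => f (c, -B) * eChar n (epsPair c B)) A]
  field_simp

lemma epsPair_neg_right (a b : GG n) : epsPair a (-b) = -(epsPair a b) := by
  simp only [epsPair, Prod.fst_neg, Prod.snd_neg]
  ring

theorem F_duality_swaps_SPT0_SPT1_aux :
    (gaugeS n ∘ stackT n ∘ gaugeS n ∘ stackTinv n ∘ gaugeS n) ∘
      (gaugeS n ∘ stackT n ∘ gaugeS n ∘ stackTinv n ∘ gaugeS n) = id ∧
    (gaugeS n ∘ stackT n ∘ gaugeS n ∘ stackTinv n ∘ gaugeS n) (Zspt n 0) = Zspt n 1 ∧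
    (gaugeS n ∘ stackT n ∘ gaugeS n ∘ stackTinv n ∘ gaugeS n) (Zspt n 1) = Zspt n 0 := by
  refine ⟨?_, ?_, ?_⟩
  · funext f P
    obtain ⟨A, B⟩ := P
    simp only [Function.comp_apply, id_eq]
    rw [L2, L2]
    rw [neg_neg, epsPair_neg_right, mul_assoc, ← eChar_add]
    simp [eChar_zero]
  · funext P
    obtain ⟨A, B⟩ := P
    simp only [Function.comp_apply]
    rw [L2]
    simp [Zspt, eChar_zero]
  · funext P
    obtain ⟨A, B⟩ := P
    simp only [Function.comp_apply]
    rw [L2]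
    simp only [Zspt, one_mul, zero_mul]
    rw [epsPair_neg_right, ← eChar_add]
    simp [eChar_zero]


end Aux

/-- the composite manipulation `F = S ∘ T ∘ S ∘ T⁻¹ ∘ S` is a
duality operation (`F ∘ F = id`) exchanging the trivial SPT phase and the
level-1 ℤ_n×ℤ_n SPT phase. -/
theorem F_duality_swaps_SPT0_SPT1 (n : ℕ) [NeZero n] :
    (gaugeS n ∘ stackT n ∘ gaugeS n ∘ stackTinv n ∘ gaugeS n) ∘
      (gaugeS n ∘ stackT n ∘ gaugeS n ∘ stackTinv n ∘ gaugeS n) = id ∧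
    (gaugeS n ∘ stackT n ∘ gaugeS n ∘ stackTinv n ∘ gaugeS n) (Zspt n 0) = Zspt n 1 ∧
    (gaugeS n ∘ stackT n ∘ gaugeS n ∘ stackTinv n ∘ gaugeS n) (Zspt n 1) = Zspt n 0 := by
  exact F_duality_swaps_SPT0_SPT1_aux

end
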